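/- Under the misspecified shared-basis model and on the event E_C (λ̲_m I ⪯ Σ_m ⪯ λ̄_m I for all m), for any fixed matrix Ū ∈ ℝ^{d²×2k} with orthonormal columns, the low-rank part of the total squared prediction error of the minimizers (Ŵ, B̂) satisfies: (1/2)·Σ_m ‖X̃_m(W*β*_m − Ŵβ̂_m)‖₂² ≤ sqrt(Σ_m ‖η̃_m'X̃_mŪ‖²_{V̄_m^{-1}}) · sqrt(2 Σ_m ‖X̃_m(W*β*_m − Ŵβ̂_m)‖₂²) + Σ_m ⟨η̃_m, X̃_m(U − Ū)r_m⟩ + sqrt(Σ_m ‖η̃_m'X̃_mŪ‖²_{V̄_m^{-1}}) · sqrt(2 Σ_m ‖X̃_m(Ū − U)r_m‖²) + 2 sqrt(λ̄)·ζ̄·sqrt(Σ_m ‖X̃_m(Ŵβ̂_m − W*β*_m)‖₂²), where V̄_m = Ū'Σ̃_mŪ + Ū'Σ̃_{m,dn}Ū, λ̄ = max_m λ̄_m, and ζ̄² = Σ_m ‖D_m‖_F². -/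

import Mathlib

/-!
Comparing the minimiser with `(W*, B*)` gives the basic inequality
`∑ ‖X̃_m Δ_m‖² ≤ 2 ∑ ⟨η̃_m + X̃_m vec D_m, X̃_m Δ_m⟩` for `Δ_m = U r_m`. Writing
`U r_m = Ū r_m + (U - Ū) r_m`, the `Ū`-part of the noise term is bounded by Cauchy–Schwarz in the
geometry of `V̄_m`, and `r_mᵀ V̄_m r_m ≤ 2 ‖X̃_m Ū r_m‖²` because on `E_C` the design is bounded
below by `λ̲_m`; Minkowski's inequality then passes from `X̃_m Ū r_m` back to `X̃_m Δ_m`. The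
misspecification term is Cauchy–Schwarz together with `‖X̃_m vec D_m‖² ≤ λ̄_m ‖D_m‖_F²` on `E_C`.
-/

open MeasureTheory Matrix Finset

noncomputable section

namespace JointLTI

/-- Euclidean (ℓ²) norm of a finite real vector. -/
def l2norm {n : Type*} [Fintype n] (v : n → ℝ) : ℝ := Real.sqrt (∑ i, v i ^ 2)

/-- Squared Euclidean norm of a finite real vector. -/
def sqNorm {n : Type*} [Fintype n] (v : n → ℝ) : ℝ := ∑ i, v i ^ 2

/-- ℓ∞ norm of a finite real vector. -/
def supNorm {n : Type*} [Fintype n] (v : n → ℝ) : ℝ := ⨆ i, |v i|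

/-- Maximum absolute row sum, i.e. the ℓ∞ → ℓ∞ operator norm, of a complex matrix. -/
def rowSumNorm {n m : Type*} [Fintype m] (A : Matrix n m ℂ) : ℝ := ⨆ i, ∑ j, ‖A i j‖

/-- The ℓ∞ → ℓ² operator norm of a complex matrix. -/
def infToTwoNorm {n m : Type*} [Fintype n] [Fintype m] (A : Matrix n m ℂ) : ℝ :=
  ⨆ v : {v : m → ℂ // ∀ j, ‖v j‖ ≤ 1},
    Real.sqrt (∑ i, ‖A.mulVec v.1 i‖ ^ 2)

/-- Spectral norm (ℓ² → ℓ² operator norm) of a real matrix. -/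
def spectralNorm {n m : Type*} [Fintype n] [Fintype m] (A : Matrix n m ℝ) : ℝ :=
  ⨆ v : {v : m → ℝ // ∑ i, v i ^ 2 ≤ 1}, l2norm (A.mulVec v.1)

/-- Squared Frobenius norm of a real matrix. -/
def frobSq {n m : Type*} [Fintype n] [Fintype m] (A : Matrix n m ℝ) : ℝ := ∑ i, ∑ j, A i j ^ 2

/-- Frobenius norm of a real matrix. -/
def frobNorm {n m : Type*} [Fintype n] [Fintype m] (A : Matrix n m ℝ) : ℝ :=
  Real.sqrt (frobSq A)

/-- The Jordan block of size `l` for the eigenvalue `lam`: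
`lam` on the diagonal, ones on the superdiagonal, zeros elsewhere. -/
def jordanBlock (l : ℕ) (lam : ℂ) : Matrix (Fin l) (Fin l) ℂ :=
  Matrix.of fun i j =>
    if (j : ℕ) = (i : ℕ) then lam else if (j : ℕ) = (i : ℕ) + 1 then 1 else 0

/-- The data of a block-diagonal Jordan matrix of total dimension `d`:
`q` blocks, of sizes `bs i`, with eigenvalues `ev i`. -/
structure JordanData (d : ℕ) where
  q : ℕ
  bs : Fin q → ℕ
  ev : Fin q → ℂ
  hsum : ∑ i, bs i = d

/-- Starting index of the `i`-th Jordan block. -/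
def blockStart {q : ℕ} (bs : Fin q → ℕ) (i : Fin q) : ℕ :=
  ∑ j : Fin q, if (j : ℕ) < (i : ℕ) then bs j else 0

/-- The block-diagonal Jordan matrix described by `J`: the Jordan blocks
`jordanBlock (J.bs i) (J.ev i)` are laid out consecutively along the diagonal. -/
def JordanData.mat {d : ℕ} (J : JordanData d) : Matrix (Fin d) (Fin d) ℂ :=
  Matrix.of fun a b =>
    ∑ i : Fin J.q,
      if blockStart J.bs i ≤ (a : ℕ) ∧ (a : ℕ) < blockStart J.bs i + J.bs i then
        (if (b : ℕ) = (a : ℕ) then J.ev i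
         else if (b : ℕ) = (a : ℕ) + 1 ∧ (a : ℕ) + 1 < blockStart J.bs i + J.bs i then 1
         else 0)
      else 0

/-- Size of the largest Jordan block. -/
def JordanData.lstar {d : ℕ} (J : JordanData d) : ℕ := Finset.univ.sup J.bs

/-- Magnitude of the largest eigenvalue (the spectral radius). -/
def JordanData.rho1 {d : ℕ} (J : JordanData d) : ℝ := ⨆ i, ‖J.ev i‖

/-- `ξ = ‖P⁻¹‖_{∞→2} ‖P‖_∞`. -/
def xiOf {d : ℕ} (P : Matrix (Fin d) (Fin d) ℂ) : ℝ := infToTwoNorm P⁻¹ * rowSumNorm P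

/-- `f(Λ) = e^{1/|λ₁|} [ (l*-1)/(-log |λ₁|) + (l*-1)! / (-log |λ₁|)^{l*} ]`. -/
def fJordan {d : ℕ} (J : JordanData d) : ℝ :=
  Real.exp (1 / J.rho1) *
    (((J.lstar : ℝ) - 1) / (-Real.log J.rho1) +
      (Nat.factorial (J.lstar - 1) : ℝ) / (-Real.log J.rho1) ^ J.lstar)

/-- `α(A) = ξ f(Λ)` when `|λ₁| < 1`, and `α(A) = ξ e^{ρ+1}` otherwise. -/
def alphaOf {d : ℕ} (P : Matrix (Fin d) (Fin d) ℂ) (J : JordanData d) (ρ : ℝ) : ℝ :=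
  if J.rho1 < 1 then xiOf P * fJordan J else xiOf P * Real.exp (ρ + 1)

/-- The covariance upper bound `λ̄` of the covariance bound theorem:
`α(A)² b̄² T` in the stable case and `α(A)² b̄² T^{2l*+1}` otherwise. -/
def lamBarOf {d : ℕ} (P : Matrix (Fin d) (Fin d) ℂ) (J : JordanData d) (ρ bbar : ℝ)
    (T : ℕ) : ℝ :=
  alphaOf P J ρ ^ 2 * bbar ^ 2 *
    (if J.rho1 < 1 then (T : ℝ) else (T : ℝ) ^ (2 * J.lstar + 1))

/-- Loewner partial order on real symmetric matrices: `A ⪯ B` iff `B - A` is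
positive semidefinite. -/
def loewnerLE {n : Type*} [Fintype n] (A B : Matrix n n ℝ) : Prop := (B - A).PosSemidef

/-- Smallest eigenvalue of a symmetric real matrix (infimum of the Rayleigh quotient). -/
def minEig {d : ℕ} (C : Matrix (Fin d) (Fin d) ℝ) : ℝ :=
  ⨅ u : {u : Fin d → ℝ // ∑ i, u i ^ 2 = 1}, u.1 ⬝ᵥ C.mulVec u.1

/-- Largest eigenvalue of a symmetric real matrix (supremum of the Rayleigh quotient). -/
def maxEig {d : ℕ} (C : Matrix (Fin d) (Fin d) ℝ) : ℝ :=
  ⨆ u : {u : Fin d → ℝ // ∑ i, u i ^ 2 = 1}, u.1 ⬝ᵥ C.mulVec u.1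

open scoped Classical in
/-- Inverse of the positive semidefinite square root of a matrix. -/
def matSqrtInv {d : ℕ} (A : Matrix (Fin d) (Fin d) ℝ) : Matrix (Fin d) (Fin d) ℝ :=
  if h : A.PosSemidef then
    ((h.1.eigenvectorUnitary : Matrix (Fin d) (Fin d) ℝ) *
      diagonal ((↑) ∘ (Real.sqrt ·) ∘ h.1.eigenvalues) *
      (star h.1.eigenvectorUnitary : Matrix (Fin d) (Fin d) ℝ))⁻¹ else 0

/-- Sample covariance matrix `Σ = ∑_{t=0}^{T-1} x(t) x(t)'`. -/
def sampleCov {d : ℕ} (T : ℕ) (xv : ℕ → Fin d → ℝ) : Matrix (Fin d) (Fin d) ℝ :=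
  ∑ t ∈ Finset.range T, vecMulVec (xv t) (xv t)

/-- `b_T(δ) = sqrt(2σ² log(2dMT/δ))`. -/
def bT (d M T : ℕ) (σ δ : ℝ) : ℝ :=
  Real.sqrt (2 * σ ^ 2 * Real.log (2 * d * M * T / δ))

/-- The vectorized design matrix `X̃ ∈ ℝ^{Td × d²}`: its row `(t,j)` is the vector
`x̃_j(t)` which carries `x(t)` in the `j`-th size-`d` block and zeros elsewhere. -/
def designMat {d : ℕ} (T : ℕ) (xv : ℕ → Fin d → ℝ) :
    Matrix (Fin T × Fin d) (Fin d × Fin d) ℝ :=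
  Matrix.of fun p q => if q.1 = p.2 then xv (p.1 : ℕ) q.2 else 0

/-- The stacked noise vector `η̃ ∈ ℝ^{Td}`, concatenating `η(1),…,η(T)`. -/
def noiseStack {d : ℕ} (T : ℕ) (e : ℕ → Fin d → ℝ) : Fin T × Fin d → ℝ :=
  fun p => e ((p.1 : ℕ) + 1) p.2

/-- The noise processes `η_m` are adapted to `ℱ`, and are mean-zero, conditionally
`σ`-sub-Gaussian martingale differences. -/
def SubGaussianMDS {Ω : Type*} [mΩ : MeasurableSpace Ω] (μ : Measure Ω)
    (ℱ : Filtration ℕ mΩ) {d M : ℕ} (η : Fin M → ℕ → Ω → Fin d → ℝ) (σ : ℝ) : Prop :=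
  (∀ m t i, StronglyMeasurable[ℱ t] fun ω => η m t ω i) ∧
  (∀ m t i, μ[fun ω => η m (t + 1) ω i | ℱ t] =ᵐ[μ] 0) ∧
  (∀ m t (l : Fin d → ℝ),
    μ[fun ω => Real.exp (∑ i, l i * η m (t + 1) ω i) | ℱ t]
      ≤ᵐ[μ] fun _ => Real.exp ((∑ i, l i ^ 2) * σ ^ 2 / 2))

/-- The noise processes have conditional covariance `C`. -/
def CondCov {Ω : Type*} [mΩ : MeasurableSpace Ω] (μ : Measure Ω)
    (ℱ : Filtration ℕ mΩ) {d M : ℕ} (η : Fin M → ℕ → Ω → Fin d → ℝ)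
    (C : Matrix (Fin d) (Fin d) ℝ) : Prop :=
  ∀ m t i j, μ[fun ω => η m (t + 1) ω i * η m (t + 1) ω j | ℱ t] =ᵐ[μ] fun _ => C i j

section Euclidean

variable {ι κ : Type*} [Fintype ι] [Fintype κ]

lemma sqNorm_eq_dotProduct (v : ι → ℝ) : sqNorm v = v ⬝ᵥ v := by
  simp only [sqNorm, dotProduct, sq]

lemma sqNorm_nonneg (v : ι → ℝ) : 0 ≤ sqNorm v :=
  sum_nonneg fun _ _ => sq_nonneg _

@[simp] lemma sqNorm_neg (v : ι → ℝ) : sqNorm (-v) = sqNorm v := by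
  simp [sqNorm]

lemma sqNorm_add (v w : ι → ℝ) : sqNorm (v + w) = sqNorm v + 2 * (v ⬝ᵥ w) + sqNorm w := by
  simp only [sqNorm_eq_dotProduct, add_dotProduct, dotProduct_add, dotProduct_comm w v]
  ring

lemma sqNorm_sub (v w : ι → ℝ) : sqNorm (v - w) = sqNorm v - 2 * (v ⬝ᵥ w) + sqNorm w := by
  rw [sub_eq_add_neg, sqNorm_add, dotProduct_neg, sqNorm_neg]
  ring

lemma dotProduct_le_sqrt_mul_sqrt (v w : ι → ℝ) : v ⬝ᵥ w ≤ √(sqNorm v) * √(sqNorm w) :=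
  Real.sum_mul_le_sqrt_mul_sqrt univ v w

lemma sum_dotProduct_le_sqrt_mul_sqrt (v w : κ → ι → ℝ) :
    ∑ m, v m ⬝ᵥ w m ≤ √(∑ m, sqNorm (v m)) * √(∑ m, sqNorm (w m)) :=
  (sum_le_sum fun m _ => dotProduct_le_sqrt_mul_sqrt (v m) (w m)).trans
    (Real.sum_sqrt_mul_sqrt_le univ (fun m => sqNorm_nonneg (v m)) fun m => sqNorm_nonneg (w m))

lemma sqrt_sum_sqNorm_add_le (v w : κ → ι → ℝ) :
    √(∑ m, sqNorm (v m + w m)) ≤ √(∑ m, sqNorm (v m)) + √(∑ m, sqNorm (w m)) := by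
  have hv := sum_nonneg fun m (_ : m ∈ univ) => sqNorm_nonneg (v m)
  have hw := sum_nonneg fun m (_ : m ∈ univ) => sqNorm_nonneg (w m)
  refine Real.sqrt_le_iff.2 ⟨by positivity, ?_⟩
  rw [add_sq, Real.sq_sqrt hv, Real.sq_sqrt hw]
  simp only [sqNorm_add, sum_add_distrib, ← mul_sum]
  linarith [sum_dotProduct_le_sqrt_mul_sqrt v w]

/-- The basic inequality of least squares. -/
lemma sum_sqNorm_le_two_mul_sum_dotProduct {v w : κ → ι → ℝ}
    (h : ∑ m, sqNorm (v m - w m) ≤ ∑ m, sqNorm (v m)) :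
    ∑ m, sqNorm (w m) ≤ 2 * ∑ m, v m ⬝ᵥ w m := by
  simp only [sqNorm_sub, sum_add_distrib, sum_sub_distrib, ← mul_sum] at h
  linarith

lemma sqNorm_mulVec_of_transpose_mul_self_eq_one {ιR : Type*} [Fintype ιR] [DecidableEq ιR]
    {U : Matrix ι ιR ℝ} (hU : Uᵀ * U = 1) (s : ιR → ℝ) : sqNorm (U *ᵥ s) = sqNorm s := by
  rw [sqNorm_eq_dotProduct, sqNorm_eq_dotProduct, ← dotProduct_transpose_mulVec, mulVec_mulVec,
    hU, one_mulVec, dotProduct_comm]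

end Euclidean

lemma _root_.Matrix.PosSemidef.dotProduct_mulVec_sq_le {n : Type*} [Fintype n]
    {P : Matrix n n ℝ} (hP : P.PosSemidef) (u w : n → ℝ) :
    (u ⬝ᵥ P *ᵥ w) ^ 2 ≤ (u ⬝ᵥ P *ᵥ u) * (w ⬝ᵥ P *ᵥ w) := by
  let := P.toSeminormedAddCommGroup hP
  let := P.toInnerProductSpace hP
  have hinner : ∀ a b : n → ℝ, inner ℝ a b = a ⬝ᵥ P *ᵥ b := fun a b => by
    rw [dotProduct_comm]; rfl
  rw [sq]
  simpa only [hinner] using real_inner_mul_inner_self_le u w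

lemma _root_.Matrix.PosDef.dotProduct_le_sqrt_inv_mul_sqrt {n : Type*} [Fintype n]
    [DecidableEq n] {V : Matrix n n ℝ} (hV : V.PosDef) (z r : n → ℝ) :
    z ⬝ᵥ r ≤ √(z ⬝ᵥ V⁻¹ *ᵥ z) * √(r ⬝ᵥ V *ᵥ r) := by
  have hz : V *ᵥ (V⁻¹ *ᵥ z) = z := by
    rw [mulVec_mulVec, mul_nonsing_inv _ hV.det_pos.ne'.isUnit, one_mulVec]
  have hVt : Vᵀ = V := hV.isHermitian.eq
  calc z ⬝ᵥ r = (V⁻¹ *ᵥ z) ⬝ᵥ V *ᵥ r := by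
        rw [← dotProduct_transpose_mulVec, hVt, hz, dotProduct_comm]
    _ ≤ √((V⁻¹ *ᵥ z) ⬝ᵥ V *ᵥ (V⁻¹ *ᵥ z) * (r ⬝ᵥ V *ᵥ r)) :=
        Real.le_sqrt_of_sq_le (hV.posSemidef.dotProduct_mulVec_sq_le _ _)
    _ = _ := by
        rw [hz, dotProduct_comm,
          Real.sqrt_mul (by simpa using hV.inv.posSemidef.dotProduct_mulVec_nonneg z)]

section WeightedLeastSquares

variable {κ ιT ιD ιR : Type*} [Fintype κ] [Fintype ιT] [Fintype ιD] [Fintype ιR]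
  [DecidableEq ιD] [DecidableEq ιR]

/-- `V̄ = Ūᵀ Σ̃ Ū + Ūᵀ Σ̃_dn Ū` with `Σ̃ = Xᵀ X` and `Σ̃_dn = c I`. -/
def weightMat (X : Matrix ιT ιD ℝ) (Ubar : Matrix ιD ιR ℝ) (c : ℝ) : Matrix ιR ιR ℝ :=
  Ubarᵀ * (Xᵀ * X) * Ubar + Ubarᵀ * (c • (1 : Matrix ιD ιD ℝ)) * Ubar

variable {X : Matrix ιT ιD ℝ} {Ubar : Matrix ιD ιR ℝ} {c : ℝ}

lemma dotProduct_weightMat_mulVec (hUbar : Ubarᵀ * Ubar = 1) (s : ιR → ℝ) :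
    s ⬝ᵥ weightMat X Ubar c *ᵥ s = sqNorm (X *ᵥ (Ubar *ᵥ s)) + c * sqNorm s := by
  rw [weightMat, Matrix.mul_smul, Matrix.mul_one, Matrix.smul_mul, hUbar, add_mulVec,
    dotProduct_add, ← mulVec_mulVec, ← mulVec_mulVec, ← mulVec_mulVec, dotProduct_transpose_mulVec,
    dotProduct_comm, dotProduct_transpose_mulVec, smul_mulVec, one_mulVec, dotProduct_smul,
    smul_eq_mul, sqNorm_eq_dotProduct, sqNorm_eq_dotProduct]

lemma posDef_weightMat (hc : 0 < c) (hUbar : Ubarᵀ * Ubar = 1) :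
    (weightMat X Ubar c).PosDef := by
  refine .of_dotProduct_mulVec_pos ?_ fun s hs => ?_
  · simp [weightMat, IsHermitian, transpose_mul, Matrix.mul_assoc]
  · rw [star_trivial, dotProduct_weightMat_mulVec hUbar]
    have hs : 0 < sqNorm s :=
      (sqNorm_nonneg s).lt_of_ne' (by rwa [sqNorm_eq_dotProduct, Ne, dotProduct_self_eq_zero])
    linarith [sqNorm_nonneg (X *ᵥ (Ubar *ᵥ s)), mul_pos hc hs]

lemma dotProduct_weightMat_mulVec_le (hUbar : Ubarᵀ * Ubar = 1)
    (hlow : ∀ u, c * sqNorm u ≤ sqNorm (X *ᵥ u)) (s : ιR → ℝ) :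
    s ⬝ᵥ weightMat X Ubar c *ᵥ s ≤ 2 * sqNorm (X *ᵥ (Ubar *ᵥ s)) := by
  have := hlow (Ubar *ᵥ s)
  rw [sqNorm_mulVec_of_transpose_mul_self_eq_one hUbar] at this
  rw [dotProduct_weightMat_mulVec hUbar]
  linarith

end WeightedLeastSquares

section JointLeastSquares

variable {κ ιT ιD ιR : Type*} [Fintype κ] [Fintype ιT] [Fintype ιD] [Fintype ιR]
  [DecidableEq ιD] [DecidableEq ιR]

def projNoise (X : κ → Matrix ιT ιD ℝ) (Ubar : Matrix ιD ιR ℝ) (c : ℝ) (e : κ → ιT → ℝ) : ℝ :=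
  ∑ m, Ubarᵀ *ᵥ ((X m)ᵀ *ᵥ e m) ⬝ᵥ (weightMat (X m) Ubar c)⁻¹ *ᵥ (Ubarᵀ *ᵥ ((X m)ᵀ *ᵥ e m))

variable {X : κ → Matrix ιT ιD ℝ} {Ubar : Matrix ιD ιR ℝ} {c : ℝ}

lemma sum_dotProduct_mulVec_le_sqrt_projNoise (hc : 0 < c) (hUbar : Ubarᵀ * Ubar = 1)
    (hlow : ∀ m u, c * sqNorm u ≤ sqNorm (X m *ᵥ u)) (e : κ → ιT → ℝ) (s : κ → ιR → ℝ) :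
    ∑ m, e m ⬝ᵥ X m *ᵥ (Ubar *ᵥ s m) ≤
      √(projNoise X Ubar c e) * √(2 * ∑ m, sqNorm (X m *ᵥ (Ubar *ᵥ s m))) := by
  have hV := fun m => posDef_weightMat (X := X m) hc hUbar
  calc ∑ m, e m ⬝ᵥ X m *ᵥ (Ubar *ᵥ s m) = ∑ m, Ubarᵀ *ᵥ ((X m)ᵀ *ᵥ e m) ⬝ᵥ s m := by
        refine sum_congr rfl fun m _ => ?_
        rw [dotProduct_comm _ (s m), dotProduct_transpose_mulVec, dotProduct_comm (_ *ᵥ e m),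
          dotProduct_transpose_mulVec]
    _ ≤ ∑ m, √(Ubarᵀ *ᵥ ((X m)ᵀ *ᵥ e m) ⬝ᵥ (weightMat (X m) Ubar c)⁻¹ *ᵥ
          (Ubarᵀ *ᵥ ((X m)ᵀ *ᵥ e m))) * √(s m ⬝ᵥ weightMat (X m) Ubar c *ᵥ s m) :=
        sum_le_sum fun m _ => (hV m).dotProduct_le_sqrt_inv_mul_sqrt _ _
    _ ≤ √(projNoise X Ubar c e) * √(∑ m, s m ⬝ᵥ weightMat (X m) Ubar c *ᵥ s m) :=
        Real.sum_sqrt_mul_sqrt_le _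
          (fun m => by
            simpa only [star_trivial] using (hV m).inv.posSemidef.dotProduct_mulVec_nonneg _)
          (fun m => by
            simpa only [star_trivial] using (hV m).posSemidef.dotProduct_mulVec_nonneg _)
    _ ≤ _ := by
        rw [mul_sum]
        gcongr with m
        exact dotProduct_weightMat_mulVec_le hUbar (hlow m) _

theorem half_sum_sqNorm_prediction_error_le {e y : κ → ιT → ℝ} {θ θ' dv : κ → ιD → ℝ}
    {U : Matrix ιD ιR ℝ} {r : κ → ιR → ℝ} {L Z : ℝ} (hc : 0 < c) (hUbar : Ubarᵀ * Ubar = 1)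
    (hfact : ∀ m, θ' m - θ m = U *ᵥ r m)
    (hy : ∀ m, y m = X m *ᵥ θ m + X m *ᵥ dv m + e m)
    (hopt : ∑ m, sqNorm (y m - X m *ᵥ θ' m) ≤ ∑ m, sqNorm (y m - X m *ᵥ θ m))
    (hlow : ∀ m u, c * sqNorm u ≤ sqNorm (X m *ᵥ u))
    (hmis : ∑ m, sqNorm (X m *ᵥ dv m) ≤ L * Z) (hZ : 0 ≤ Z) :
    1 / 2 * ∑ m, sqNorm (X m *ᵥ (θ m - θ' m)) ≤
      √(projNoise X Ubar c e) * √(2 * ∑ m, sqNorm (X m *ᵥ (θ m - θ' m))) +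
      (∑ m, e m ⬝ᵥ X m *ᵥ ((U - Ubar) *ᵥ r m)) +
      √(projNoise X Ubar c e) * √(2 * ∑ m, sqNorm (X m *ᵥ ((Ubar - U) *ᵥ r m))) +
      2 * √L * √Z * √(∑ m, sqNorm (X m *ᵥ (θ' m - θ m))) := by
  have hpred : ∀ m, X m *ᵥ (θ m - θ' m) = -(X m *ᵥ (U *ᵥ r m)) := fun m => by
    rw [← hfact, ← mulVec_neg, neg_sub]
  simp only [hpred, hfact, sqNorm_neg]
  set S := ∑ m, sqNorm (X m *ᵥ (U *ᵥ r m))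
  have hbasic : S ≤ 2 * ∑ m, (e m + X m *ᵥ dv m) ⬝ᵥ X m *ᵥ (U *ᵥ r m) := by
    refine sum_sqNorm_le_two_mul_sum_dotProduct ?_
    have hres : ∀ m, y m - X m *ᵥ θ m = e m + X m *ᵥ dv m := fun m => by
      rw [hy]; abel
    have hres' : ∀ m, y m - X m *ᵥ θ' m = e m + X m *ᵥ dv m - X m *ᵥ (U *ᵥ r m) := fun m => by
      rw [← hres, ← hfact, mulVec_sub]; abel
    simpa only [hres, hres'] using hopt
  have hsplit : ∑ m, (e m + X m *ᵥ dv m) ⬝ᵥ X m *ᵥ (U *ᵥ r m) =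
      ∑ m, e m ⬝ᵥ X m *ᵥ (Ubar *ᵥ r m) + ∑ m, e m ⬝ᵥ X m *ᵥ ((U - Ubar) *ᵥ r m) +
        ∑ m, X m *ᵥ dv m ⬝ᵥ X m *ᵥ (U *ᵥ r m) := by
    simp only [← sum_add_distrib, add_dotProduct, sub_mulVec, mulVec_sub, dotProduct_sub]
    exact sum_congr rfl fun m _ => by ring
  have hminkowski : √(2 * ∑ m, sqNorm (X m *ᵥ (Ubar *ᵥ r m))) ≤
      √(2 * S) + √(2 * ∑ m, sqNorm (X m *ᵥ ((Ubar - U) *ᵥ r m))) := by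
    have hUbar_r : ∀ m,
        X m *ᵥ (Ubar *ᵥ r m) = X m *ᵥ (U *ᵥ r m) + X m *ᵥ ((Ubar - U) *ᵥ r m) := fun m => by
      rw [sub_mulVec, mulVec_sub]; abel
    simp only [Real.sqrt_mul zero_le_two, ← mul_add, hUbar_r]
    gcongr
    exact sqrt_sum_sqNorm_add_le _ _
  have hnoise := (sum_dotProduct_mulVec_le_sqrt_projNoise hc hUbar hlow e r).trans
    (mul_le_mul_of_nonneg_left hminkowski (Real.sqrt_nonneg _))
  have hmisfit : ∑ m, X m *ᵥ dv m ⬝ᵥ X m *ᵥ (U *ᵥ r m) ≤ √L * √Z * √S := by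
    rw [← Real.sqrt_mul' L hZ]
    exact (sum_dotProduct_le_sqrt_mul_sqrt _ _).trans (by gcongr)
  have : 0 ≤ √L * √Z * √S := by positivity
  rw [mul_add] at hnoise
  linarith

end JointLeastSquares

lemma loewnerLE.dotProduct_mulVec_le {n : Type*} [Fintype n] {P Q : Matrix n n ℝ}
    (h : loewnerLE P Q) (w : n → ℝ) : w ⬝ᵥ P *ᵥ w ≤ w ⬝ᵥ Q *ᵥ w := by
  have := h.dotProduct_mulVec_nonneg w
  rw [star_trivial, sub_mulVec, dotProduct_sub] at this
  linarith

lemma frobSq_nonneg {n m : Type*} [Fintype n] [Fintype m] (A : Matrix n m ℝ) : 0 ≤ frobSq A :=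
  sum_nonneg fun _ _ => sum_nonneg fun _ _ => sq_nonneg _

lemma sqNorm_uncurry {n m : Type*} [Fintype n] [Fintype m] (A : Matrix n m ℝ) :
    sqNorm (Function.uncurry A) = frobSq A := by
  simp only [sqNorm, frobSq, Fintype.sum_prod_type]
  rfl

section DesignMatrix

variable {d T : ℕ}

lemma designMat_mulVec_apply (xv : ℕ → Fin d → ℝ) (u : Fin d × Fin d → ℝ)
    (p : Fin T × Fin d) :
    (designMat T xv *ᵥ u) p = xv p.1 ⬝ᵥ Function.curry u p.2 := by
  simp only [mulVec, dotProduct, designMat, of_apply, ite_mul, zero_mul, Fintype.sum_prod_type,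
    sum_ite_irrel, sum_const_zero, sum_ite_eq', mem_univ, ↓reduceIte, Function.curry_apply]

lemma dotProduct_sampleCov_mulVec (xv : ℕ → Fin d → ℝ) (w : Fin d → ℝ) :
    w ⬝ᵥ sampleCov T xv *ᵥ w = ∑ t ∈ range T, (xv t ⬝ᵥ w) ^ 2 := by
  simp only [sampleCov, sum_mulVec, dotProduct_sum, vecMulVec_mulVec, op_smul_eq_smul,
    dotProduct_smul, smul_eq_mul, dotProduct_comm w (xv _), sq]

lemma sqNorm_designMat_mulVec (xv : ℕ → Fin d → ℝ) (u : Fin d × Fin d → ℝ) :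
    sqNorm (designMat T xv *ᵥ u) =
      ∑ j, Function.curry u j ⬝ᵥ sampleCov T xv *ᵥ Function.curry u j := by
  simp only [sqNorm, designMat_mulVec_apply, dotProduct_sampleCov_mulVec, Fintype.sum_prod_type]
  rw [sum_comm]
  exact sum_congr rfl fun j _ => Fin.sum_univ_eq_sum_range (fun t => (xv t ⬝ᵥ _) ^ 2) T

lemma sum_dotProduct_smul_one_mulVec (c : ℝ) (u : Fin d × Fin d → ℝ) :
    ∑ j, Function.curry u j ⬝ᵥ (c • (1 : Matrix (Fin d) (Fin d) ℝ)) *ᵥ Function.curry u j =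
      c * sqNorm u := by
  simp only [smul_mulVec, one_mulVec, dotProduct_smul, smul_eq_mul, ← mul_sum,
    ← sqNorm_eq_dotProduct]
  simp only [sqNorm, Fintype.sum_prod_type, Function.curry_apply]

lemma le_sqNorm_designMat_mulVec {xv : ℕ → Fin d → ℝ} {lam : ℝ}
    (h : loewnerLE (lam • (1 : Matrix (Fin d) (Fin d) ℝ)) (sampleCov T xv))
    (u : Fin d × Fin d → ℝ) :
    lam * sqNorm u ≤ sqNorm (designMat T xv *ᵥ u) := by
  rw [sqNorm_designMat_mulVec, ← sum_dotProduct_smul_one_mulVec]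
  exact sum_le_sum fun j _ => h.dotProduct_mulVec_le _

lemma sqNorm_designMat_mulVec_le {xv : ℕ → Fin d → ℝ} {lam : ℝ}
    (h : loewnerLE (sampleCov T xv) (lam • (1 : Matrix (Fin d) (Fin d) ℝ)))
    (u : Fin d × Fin d → ℝ) :
    sqNorm (designMat T xv *ᵥ u) ≤ lam * sqNorm u := by
  rw [sqNorm_designMat_mulVec, ← sum_dotProduct_smul_one_mulVec]
  exact sum_le_sum fun j _ => h.dotProduct_mulVec_le _

lemma stackedNextStates_eq {A D : Matrix (Fin d) (Fin d) ℝ} {θ : Fin d × Fin d → ℝ}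
    {x η : ℕ → Fin d → ℝ} (hdyn : ∀ t < T, x (t + 1) = A *ᵥ x t + η (t + 1))
    (hA : ∀ j i, A j i = θ (j, i) + D j i) :
    (fun p : Fin T × Fin d => x (p.1 + 1) p.2) =
      designMat T x *ᵥ θ + designMat T x *ᵥ Function.uncurry D + noiseStack T η := by
  ext p
  rw [Pi.add_apply, Pi.add_apply, designMat_mulVec_apply, designMat_mulVec_apply,
    hdyn p.1 p.1.isLt]
  simp only [Pi.add_apply, mulVec, dotProduct, hA, add_mul, sum_add_distrib, noiseStack,
    Function.curry_apply]
  congr 2 <;> exact sum_congr rfl fun i _ => mul_comm _ _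

end DesignMatrix

lemma minEig_pos {d : ℕ} (hd : 0 < d) {C : Matrix (Fin d) (Fin d) ℝ} (hC : C.PosDef) :
    0 < minEig C := by
  have : Nonempty (Fin d) := ⟨⟨0, hd⟩⟩
  have hsphere : ∀ u : EuclideanSpace ℝ (Fin d), u ∈ Metric.sphere 0 1 ↔ ∑ i, u i ^ 2 = 1 :=
    fun u => by
      rw [mem_sphere_zero_iff_norm, ← EuclideanSpace.real_norm_sq_eq,
        pow_eq_one_iff_of_nonneg (norm_nonneg u) two_ne_zero]
  obtain ⟨u₀, hu₀, hmin⟩ := (isCompact_sphere (0 : EuclideanSpace ℝ (Fin d)) 1).exists_isMinOn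
    (NormedSpace.sphere_nonempty.2 zero_le_one)
    (show Continuous fun u : EuclideanSpace ℝ (Fin d) => u.ofLp ⬝ᵥ C *ᵥ u.ofLp by
      fun_prop).continuousOn
  have hu₀' := (hsphere u₀).1 hu₀
  have : Nonempty {u : Fin d → ℝ // ∑ i, u i ^ 2 = 1} := ⟨⟨u₀.ofLp, hu₀'⟩⟩
  have hpos : 0 < u₀.ofLp ⬝ᵥ C *ᵥ u₀.ofLp := by
    refine hC.dotProduct_mulVec_pos fun h => ?_
    simp [h] at hu₀'
  exact hpos.trans_le (le_ciInf fun u => hmin ((hsphere (WithLp.toLp 2 u.1)).2 u.2))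

theorem prediction_error_decomposition_misspecified_general
    (d M T k : ℕ)
    (C : Matrix (Fin d) (Fin d) ℝ) (hC : C.PosDef)
    (A : Fin M → Matrix (Fin d) (Fin d) ℝ)
    (x η : Fin M → ℕ → Fin d → ℝ)
    -- dynamics for t = 0, …, T − 1
    (hdyn : ∀ m, ∀ t < T, x m (t + 1) = (A m).mulVec (x m t) + η m (t + 1))
    -- misspecified shared-basis model, in vectorized form `Ã_m = W* β*_m + D̃_m`
    (Wstar : Matrix (Fin d × Fin d) (Fin k) ℝ) (βstar : Fin M → Fin k → ℝ)
    (D : Fin M → Matrix (Fin d) (Fin d) ℝ)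
    (hshared : ∀ m j i, A m j i = Wstar.mulVec (βstar m) (j, i) + D m j i)
    -- the joint estimator minimizes the squared loss
    (Wh : Matrix (Fin d × Fin d) (Fin k) ℝ) (bh : Fin M → Fin k → ℝ)
    (hopt : ∀ (W : Matrix (Fin d × Fin d) (Fin k) ℝ) (β : Fin M → Fin k → ℝ),
      ∑ m, sqNorm ((fun p : Fin T × Fin d => x m ((p.1 : ℕ) + 1) p.2) -
          (designMat T (x m)).mulVec (Wh.mulVec (bh m))) ≤
        ∑ m, sqNorm ((fun p : Fin T × Fin d => x m ((p.1 : ℕ) + 1) p.2) -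
          (designMat T (x m)).mulVec (W.mulVec (β m))))
    -- factorization of the shared-part error `Ŵβ̂_m − W*β*_m = U r_m`
    (U : Matrix (Fin d × Fin d) (Fin (2 * k)) ℝ)
    (r : Fin M → Fin (2 * k) → ℝ)
    (hfact : ∀ m, Wh.mulVec (bh m) - Wstar.mulVec (βstar m) = U.mulVec (r m))
    -- a fixed orthonormal matrix Ū
    (Ubar : Matrix (Fin d × Fin d) (Fin (2 * k)) ℝ) (hUbar : Ubarᵀ * Ubar = 1)
    -- covariance upper bounds and the event `E_C` : `λ̲_m I ⪯ Σ_m ⪯ λ̄_m I`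
    (lamBar : Fin M → ℝ)
    (hEC : ∀ m,
      loewnerLE ((minEig C * T / 4) • (1 : Matrix (Fin d) (Fin d) ℝ)) (sampleCov T (x m)) ∧
      loewnerLE (sampleCov T (x m)) (lamBar m • (1 : Matrix (Fin d) (Fin d) ℝ))) :
    1 / 2 * ∑ m, sqNorm
        ((designMat T (x m)).mulVec (Wstar.mulVec (βstar m) - Wh.mulVec (bh m))) ≤
      Real.sqrt (∑ m,
          Ubarᵀ.mulVec ((designMat T (x m))ᵀ.mulVec (noiseStack T (η m))) ⬝ᵥ
            (Ubarᵀ * ((designMat T (x m))ᵀ * designMat T (x m)) * Ubar +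
              Ubarᵀ * ((minEig C * T / 4) •
                (1 : Matrix (Fin d × Fin d) (Fin d × Fin d) ℝ)) * Ubar)⁻¹.mulVec
              (Ubarᵀ.mulVec ((designMat T (x m))ᵀ.mulVec (noiseStack T (η m))))) *
        Real.sqrt (2 * ∑ m, sqNorm
          ((designMat T (x m)).mulVec (Wstar.mulVec (βstar m) - Wh.mulVec (bh m)))) +
      (∑ m, noiseStack T (η m) ⬝ᵥ
        (designMat T (x m)).mulVec ((U - Ubar).mulVec (r m))) +
      Real.sqrt (∑ m,
          Ubarᵀ.mulVec ((designMat T (x m))ᵀ.mulVec (noiseStack T (η m))) ⬝ᵥ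
            (Ubarᵀ * ((designMat T (x m))ᵀ * designMat T (x m)) * Ubar +
              Ubarᵀ * ((minEig C * T / 4) •
                (1 : Matrix (Fin d × Fin d) (Fin d × Fin d) ℝ)) * Ubar)⁻¹.mulVec
              (Ubarᵀ.mulVec ((designMat T (x m))ᵀ.mulVec (noiseStack T (η m))))) *
        Real.sqrt (2 * ∑ m, sqNorm
          ((designMat T (x m)).mulVec ((Ubar - U).mulVec (r m)))) +
      2 * Real.sqrt (⨆ m : Fin M, lamBar m) * Real.sqrt (∑ m, frobSq (D m)) *
        Real.sqrt (∑ m, sqNorm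
          ((designMat T (x m)).mulVec (Wh.mulVec (bh m) - Wstar.mulVec (βstar m)))) := by
  -- for `T = 0` or `d = 0` we get `λ̲ = 0`, but then every sum over `Fin T × Fin d` vanishes
  rcases isEmpty_or_nonempty (Fin T × Fin d) with _ | ⟨t, j⟩
  · simp [sqNorm, dotProduct]
  have hc : 0 < minEig C * T / 4 := by
    have := minEig_pos j.pos hC
    have : (0 : ℝ) < T := Nat.cast_pos.2 t.pos
    positivity
  have hmis : ∑ m, sqNorm (designMat T (x m) *ᵥ Function.uncurry (D m)) ≤
      (⨆ m, lamBar m) * ∑ m, frobSq (D m) := by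
    rw [mul_sum]
    refine sum_le_sum fun m _ => ?_
    calc _ ≤ lamBar m * frobSq (D m) := by
          simpa only [sqNorm_uncurry] using
            sqNorm_designMat_mulVec_le (hEC m).2 (Function.uncurry (D m))
      _ ≤ _ := mul_le_mul_of_nonneg_right (le_ciSup (Finite.bddAbove_range lamBar) m)
          (frobSq_nonneg _)
  exact half_sum_sqNorm_prediction_error_le hc hUbar hfact
    (fun m => stackedNextStates_eq (hdyn m) (hshared m)) (hopt Wstar βstar)
    (fun m => le_sqNorm_designMat_mulVec (hEC m).1) hmis
    (sum_nonneg fun m _ => frobSq_nonneg (D m))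

/-- Prediction error decomposition under the misspecified shared-basis
model: on the event `E_C` (`λ̲_m I ⪯ Σ_m ⪯ λ̄_m I` for all `m`), for any fixed orthonormal
`Ū ∈ ℝ^{d²×2k}`, the low-rank part of the total squared prediction error of the minimizers
`(Ŵ, B̂)` satisfies the four-term decomposition, the last term being
`2 sqrt(λ̄) ζ̄ sqrt(∑_m ‖X̃_m(Ŵβ̂_m − W*β*_m)‖₂²)` with `ζ̄² = ∑_m ‖D_m‖_F²`. -/
theorem prediction_error_decomposition_misspecified
    (d M T k : ℕ)
    (C : Matrix (Fin d) (Fin d) ℝ) (hC : C.PosDef)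
    (A : Fin M → Matrix (Fin d) (Fin d) ℝ)
    (x η : Fin M → ℕ → Fin d → ℝ)
    -- dynamics for t = 0, …, T − 1
    (hdyn : ∀ m, ∀ t < T, x m (t + 1) = (A m).mulVec (x m t) + η m (t + 1))
    -- misspecified shared-basis model, in vectorized form `Ã_m = W* β*_m + D̃_m`
    (Wstar : Matrix (Fin d × Fin d) (Fin k) ℝ) (βstar : Fin M → Fin k → ℝ)
    (D : Fin M → Matrix (Fin d) (Fin d) ℝ)
    (hshared : ∀ m j i, A m j i = Wstar.mulVec (βstar m) (j, i) + D m j i)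
    -- the joint estimator minimizes the squared loss
    (Wh : Matrix (Fin d × Fin d) (Fin k) ℝ) (bh : Fin M → Fin k → ℝ)
    (hopt : ∀ (W : Matrix (Fin d × Fin d) (Fin k) ℝ) (β : Fin M → Fin k → ℝ),
      ∑ m, sqNorm ((fun p : Fin T × Fin d => x m ((p.1 : ℕ) + 1) p.2) -
          (designMat T (x m)).mulVec (Wh.mulVec (bh m))) ≤
        ∑ m, sqNorm ((fun p : Fin T × Fin d => x m ((p.1 : ℕ) + 1) p.2) -
          (designMat T (x m)).mulVec (W.mulVec (β m))))
    -- factorization of the shared-part error `Ŵβ̂_m − W*β*_m = U r_m`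
    (U : Matrix (Fin d × Fin d) (Fin (2 * k)) ℝ) (hU : Uᵀ * U = 1)
    (r : Fin M → Fin (2 * k) → ℝ)
    (hfact : ∀ m, Wh.mulVec (bh m) - Wstar.mulVec (βstar m) = U.mulVec (r m))
    -- a fixed orthonormal matrix Ū
    (Ubar : Matrix (Fin d × Fin d) (Fin (2 * k)) ℝ) (hUbar : Ubarᵀ * Ubar = 1)
    -- covariance upper bounds and the event `E_C` : `λ̲_m I ⪯ Σ_m ⪯ λ̄_m I`
    (lamBar : Fin M → ℝ)
    (hEC : ∀ m,
      loewnerLE ((minEig C * T / 4) • (1 : Matrix (Fin d) (Fin d) ℝ)) (sampleCov T (x m)) ∧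
      loewnerLE (sampleCov T (x m)) (lamBar m • (1 : Matrix (Fin d) (Fin d) ℝ))) :
    1 / 2 * ∑ m, sqNorm
        ((designMat T (x m)).mulVec (Wstar.mulVec (βstar m) - Wh.mulVec (bh m))) ≤
      Real.sqrt (∑ m,
          Ubarᵀ.mulVec ((designMat T (x m))ᵀ.mulVec (noiseStack T (η m))) ⬝ᵥ
            (Ubarᵀ * ((designMat T (x m))ᵀ * designMat T (x m)) * Ubar +
              Ubarᵀ * ((minEig C * T / 4) •
                (1 : Matrix (Fin d × Fin d) (Fin d × Fin d) ℝ)) * Ubar)⁻¹.mulVec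
              (Ubarᵀ.mulVec ((designMat T (x m))ᵀ.mulVec (noiseStack T (η m))))) *
        Real.sqrt (2 * ∑ m, sqNorm
          ((designMat T (x m)).mulVec (Wstar.mulVec (βstar m) - Wh.mulVec (bh m)))) +
      (∑ m, noiseStack T (η m) ⬝ᵥ
        (designMat T (x m)).mulVec ((U - Ubar).mulVec (r m))) +
      Real.sqrt (∑ m,
          Ubarᵀ.mulVec ((designMat T (x m))ᵀ.mulVec (noiseStack T (η m))) ⬝ᵥ
            (Ubarᵀ * ((designMat T (x m))ᵀ * designMat T (x m)) * Ubar +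
              Ubarᵀ * ((minEig C * T / 4) •
                (1 : Matrix (Fin d × Fin d) (Fin d × Fin d) ℝ)) * Ubar)⁻¹.mulVec
              (Ubarᵀ.mulVec ((designMat T (x m))ᵀ.mulVec (noiseStack T (η m))))) *
        Real.sqrt (2 * ∑ m, sqNorm
          ((designMat T (x m)).mulVec ((Ubar - U).mulVec (r m)))) +
      2 * Real.sqrt (⨆ m : Fin M, lamBar m) * Real.sqrt (∑ m, frobSq (D m)) *
        Real.sqrt (∑ m, sqNorm
          ((designMat T (x m)).mulVec (Wh.mulVec (bh m) - Wstar.mulVec (βstar m)))) :=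
  prediction_error_decomposition_misspecified_general d M T k C hC A x η hdyn Wstar βstar D hshared
    Wh bh hopt U r hfact Ubar hUbar lamBar hEC

end JointLTI
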